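/- In G_I, the elements u = g1 g2 g3 g2 and v = g2 g3 g1 g3 satisfy u^2 = e, v^2 = e and uv = vu; they lie in the kernel of rho; and the subgroup of G_I they generate is isomorphic to (Z/2Z)^2. -/

import Mathlib

/-!
Write `a = g1`, `b = g2`, `c = g3`. Then `u = a · b⁻¹cb` is a product of two commuting involutions,
the braid relation `⟨b, c⟩` makes `v = (bc) u (bc)⁻¹`, and `uv = bab⁻¹ · c` is again a product of
two commuting involutions (conjugate the relation `[a, b⁻¹cb]` by `b`). So `u`, `v` and `uv` are
involutions, hence `u` and `v` commute. That `ρ` kills `u` and `v` is a computation in `S₅`; that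
`u`, `v`, `uv` are nontrivial is seen in a lift of `ρ` to signed permutations, so `⟨u, v⟩` is a
Klein four-group.
-/

namespace Stmt5

/-- Generators: `0 ↦ g1`, `1 ↦ g1'`, `2 ↦ g2`, `3 ↦ g3`, `4 ↦ g4`, `5 ↦ g5`. -/
def g (i : Fin 6) : FreeGroup (Fin 6) := FreeGroup.of i

/-- The braid relator `x y x (y x y)⁻¹`, i.e. `<x,y> = e`. -/
def braid (x y : FreeGroup (Fin 6)) : FreeGroup (Fin 6) := x * y * x * (y * x * y)⁻¹

/-- The commutator relator `x y x⁻¹ y⁻¹`, i.e. `[x,y] = e`. -/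
def comm (x y : FreeGroup (Fin 6)) : FreeGroup (Fin 6) := x * y * x⁻¹ * y⁻¹

/-- Relators of the group `G_I` from Theorem 3.4 (union of the Cayley cubic degeneration
and two planes, Type I).  Here `g 0 = g1`, `g 1 = g1'`, `g 2 = g2`, `g 3 = g3`,
`g 4 = g4`, `g 5 = g5`. -/
def rels : Set (FreeGroup (Fin 6)) :=
  { (g 0) ^ 2, (g 1) ^ 2, (g 2) ^ 2, (g 3) ^ 2, (g 4) ^ 2, (g 5) ^ 2,
    comm (g 2) (g 4), comm (g 3) (g 5), comm (g 4) (g 5),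
    braid (g 0) (g 2), braid (g 0) (g 4), braid (g 0) (g 5),
    braid (g 1) (g 2), braid (g 1) (g 4), braid (g 1) (g 5),
    braid (g 2) (g 3), braid (g 2) (g 5), braid (g 3) (g 4),
    comm (g 0) ((g 2)⁻¹ * g 3 * g 2), comm (g 1) ((g 2)⁻¹ * g 3 * g 2) }

/-- The presented group `G_I`. -/
abbrev GI := PresentedGroup rels

end Stmt5

section

variable {G : Type*} [Group G] {x y : G}

theorem inv_eq_self_of_sq_eq_one (hx : x ^ 2 = 1) : x⁻¹ = x :=
  inv_eq_of_mul_eq_one_right ((sq x).symm.trans hx)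

theorem Commute.mul_sq_eq_one (h : Commute x y) (hx : x ^ 2 = 1) (hy : y ^ 2 = 1) :
    (x * y) ^ 2 = 1 := by
  rw [h.mul_pow, hx, hy, one_mul]

theorem commute_of_sq_eq_one (hx : x ^ 2 = 1) (hy : y ^ 2 = 1) (hxy : (x * y) ^ 2 = 1) :
    Commute x y :=
  calc x * y = (x * y)⁻¹ := (inv_eq_self_of_sq_eq_one hxy).symm
    _ = y * x := by rw [mul_inv_rev, inv_eq_self_of_sq_eq_one hx, inv_eq_self_of_sq_eq_one hy]

def involutionHom (hx : x ^ 2 = 1) : Multiplicative (ZMod 2) →* G :=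
  MonoidHom.mk' (fun k => x ^ k.toAdd.val) fun k l => by
    rw [toAdd_mul, ZMod.val_add, ← pow_eq_pow_mod _ hx, pow_add]

theorem involutionHom_apply (hx : x ^ 2 = 1) (k : Multiplicative (ZMod 2)) :
    involutionHom hx k = x ^ k.toAdd.val := rfl

theorem range_involutionHom (hx : x ^ 2 = 1) : (involutionHom hx).range = Subgroup.zpowers x := by
  apply le_antisymm
  · rintro - ⟨k, rfl⟩
    exact pow_mem (Subgroup.mem_zpowers x) _
  · rw [Subgroup.zpowers_le]
    exact ⟨Multiplicative.ofAdd 1, pow_one x⟩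

def kleinFourHom (hx : x ^ 2 = 1) (hy : y ^ 2 = 1) (hxy : Commute x y) :
    Multiplicative (ZMod 2) × Multiplicative (ZMod 2) →* G :=
  (involutionHom hx).noncommCoprod (involutionHom hy) fun k l =>
    show Commute (involutionHom hx k) (involutionHom hy l) from hxy.pow_pow _ _

theorem range_kleinFourHom (hx : x ^ 2 = 1) (hy : y ^ 2 = 1) (hxy : Commute x y) :
    (kleinFourHom hx hy hxy).range = Subgroup.closure {x, y} := by
  rw [kleinFourHom, MonoidHom.noncommCoprod_range, range_involutionHom, range_involutionHom,
    Subgroup.zpowers_eq_closure, Subgroup.zpowers_eq_closure, ← Subgroup.closure_union,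
    Set.singleton_union]

theorem kleinFourHom_injective (hx : x ^ 2 = 1) (hy : y ^ 2 = 1) (hxy : Commute x y)
    (hx1 : x ≠ 1) (hy1 : y ≠ 1) (hxy1 : x * y ≠ 1) :
    Function.Injective (kleinFourHom hx hy hxy) := by
  rw [injective_iff_map_eq_one]
  rintro ⟨k, l⟩ h
  induction k using Multiplicative.rec with | ofAdd k => ?_
  induction l using Multiplicative.rec with | ofAdd l => ?_
  simp only [kleinFourHom, MonoidHom.noncommCoprod_apply, involutionHom_apply, toAdd_ofAdd] at h
  have zmod_two : ∀ k : ZMod 2, k = 0 ∨ k = 1 := by decide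
  rcases zmod_two k with rfl | rfl <;> rcases zmod_two l with rfl | rfl <;> simp_all [ZMod.val_one]

theorem nonempty_closure_pair_mulEquiv (hx : x ^ 2 = 1) (hy : y ^ 2 = 1)
    (hxy : Commute x y) (hx1 : x ≠ 1) (hy1 : y ≠ 1) (hxy1 : x * y ≠ 1) :
    Nonempty (Subgroup.closure {x, y} ≃* Multiplicative (ZMod 2 × ZMod 2)) :=
  ⟨(MulEquiv.subgroupCongr (range_kleinFourHom hx hy hxy).symm).trans
    ((MonoidHom.ofInjective (kleinFourHom_injective hx hy hxy hx1 hy1 hxy1)).symm.trans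
      (MulEquiv.prodMultiplicative _ _).symm)⟩

end

section

variable {G : Type*} [Group G] {a b c : G}

theorem sq_mul_mul_mul_eq_one_of_commute_conj (ha : a ^ 2 = 1) (hb : b ^ 2 = 1) (hc : c ^ 2 = 1)
    (hcomm : Commute a (b⁻¹ * c * b)) : (a * b * c * b) ^ 2 = 1 := by
  have hconj : (b⁻¹ * c * b) ^ 2 = 1 := by
    rw [sq, show b⁻¹ * c * b * (b⁻¹ * c * b) = b⁻¹ * (c * c) * b by group, ← sq, hc]
    group
  calc (a * b * c * b) ^ 2 = (a * (b⁻¹ * c * b)) ^ 2 := by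
        rw [inv_eq_self_of_sq_eq_one hb, mul_assoc a, mul_assoc a]
    _ = 1 := hcomm.mul_sq_eq_one ha hconj

theorem mul_mul_mul_eq_conj_of_braid (hbc : b * c * b = c * b * c) :
    b * c * a * c = (b * c) * (a * b * c * b) * (b * c)⁻¹ :=
  calc b * c * a * c = b * c * a * (c * b * c) * c⁻¹ * b⁻¹ := by group
    _ = (b * c) * (a * b * c * b) * (b * c)⁻¹ := by rw [← hbc]; group

theorem mul_mul_mul_mul_eq_conj_mul_of_braid (hb : b ^ 2 = 1) (hc : c ^ 2 = 1)
    (hab : a * b * a = b * a * b) :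
    (a * b * c * b) * (b * c * a * c) = (b * a * b⁻¹) * c :=
  calc (a * b * c * b) * (b * c * a * c) = a * b * c * (b * b) * c * a * c := by group
    _ = a * b * a * c := by rw [← sq, hb, mul_one, mul_assoc _ c c, ← sq, hc, mul_one]
    _ = (b * a * b⁻¹) * c := by rw [hab, inv_eq_self_of_sq_eq_one hb]

theorem sq_eq_one_and_commute_of_braid (ha : a ^ 2 = 1) (hb : b ^ 2 = 1) (hc : c ^ 2 = 1)
    (hab : a * b * a = b * a * b) (hbc : b * c * b = c * b * c)
    (hcomm : Commute a (b⁻¹ * c * b)) :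
    (a * b * c * b) ^ 2 = 1 ∧ (b * c * a * c) ^ 2 = 1 ∧
      Commute (a * b * c * b) (b * c * a * c) := by
  have hu := sq_mul_mul_mul_eq_one_of_commute_conj ha hb hc hcomm
  have hv : (b * c * a * c) ^ 2 = 1 := by
    rw [mul_mul_mul_eq_conj_of_braid hbc, conj_pow, hu, mul_one, mul_inv_cancel]
  have hconj : Commute (b * a * b⁻¹) c := by
    simpa only [mul_assoc, mul_inv_cancel_left, mul_inv_cancel, mul_one]
      using (Commute.conj_iff b).mpr hcomm
  have huv : ((a * b * c * b) * (b * c * a * c)) ^ 2 = 1 := by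
    rw [mul_mul_mul_mul_eq_conj_mul_of_braid hb hc hab]
    exact hconj.mul_sq_eq_one (by rw [conj_pow, ha, mul_one, mul_inv_cancel]) hc
  exact ⟨hu, hv, commute_of_sq_eq_one hu hv huv⟩

end

namespace Stmt5

open PresentedGroup

theorem mk_g (i : Fin 6) : mk rels (g i) = of i := rfl

theorem of_sq_eq_one (i : Fin 6) : (of i : GI) ^ 2 = 1 := by
  have h : g i ^ 2 ∈ rels := by fin_cases i <;> simp [rels]
  simpa only [map_pow, mk_g] using one_of_mem h

theorem of_braid {i j : Fin 6} (h : braid (g i) (g j) ∈ rels) :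
    (of i : GI) * of j * of i = of j * of i * of j := by
  simpa only [map_mul, mk_g] using mk_eq_mk_of_mul_inv_mem h

theorem commute_mk_of_comm_mem {x y : FreeGroup (Fin 6)} (h : comm x y ∈ rels) :
    Commute (mk rels x) (mk rels y) := by
  have := one_of_mem h
  rwa [comm, map_mul, map_mul, map_mul, map_inv, map_inv, mul_inv_eq_one, mul_inv_eq_iff_eq_mul]
    at this

theorem commute_of_zero_conj_of_three : Commute (of 0 : GI) ((of 2)⁻¹ * of 3 * of 2) := by
  simpa only [map_mul, map_inv, mk_g] using
    commute_mk_of_comm_mem (show comm (g 0) ((g 2)⁻¹ * g 3 * g 2) ∈ rels by simp [rels])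

/-- Images of the generators in the signed permutations of `±{0, …, 4}`, where `i + 5` stands for
`-i`: a lift of `ρ` in which `g1` and `g1'` also change signs. -/
def signedPerm : Fin 6 → Equiv.Perm (Fin 10)
  | 0 => Equiv.swap 0 6 * Equiv.swap 1 5
  | 1 => Equiv.swap 0 6 * Equiv.swap 1 5
  | 2 => Equiv.swap 0 2 * Equiv.swap 5 7
  | 3 => Equiv.swap 1 2 * Equiv.swap 6 7
  | 4 => Equiv.swap 1 3 * Equiv.swap 6 8
  | 5 => Equiv.swap 0 4 * Equiv.swap 5 9

theorem signedPerm_rels : ∀ r ∈ rels, FreeGroup.lift signedPerm r = 1 := by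
  simp only [rels, Set.mem_insert_iff, Set.mem_singleton_iff, forall_eq_or_imp, forall_eq, g,
    braid, comm, map_mul, map_inv, map_pow, FreeGroup.lift_apply_of]
  decide

theorem toGroup_signedPerm_of (i : Fin 6) :
    toGroup signedPerm_rels (of i : GI) = signedPerm i := toGroup.of signedPerm_rels

theorem u_v_generate_klein_general (ρ : GI →* Equiv.Perm (Fin 5))
    (h1 : ρ (PresentedGroup.of 0) = Equiv.swap 0 1)
    (h2 : ρ (PresentedGroup.of 2) = Equiv.swap 0 2)
    (h3 : ρ (PresentedGroup.of 3) = Equiv.swap 1 2) :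
    ∀ u v : GI,
      u = PresentedGroup.of 0 * PresentedGroup.of 2 * PresentedGroup.of 3
            * PresentedGroup.of 2 →
      v = PresentedGroup.of 2 * PresentedGroup.of 3 * PresentedGroup.of 0
            * PresentedGroup.of 3 →
      u ^ 2 = 1 ∧ v ^ 2 = 1 ∧ u * v = v * u ∧
      u ∈ MonoidHom.ker ρ ∧ v ∈ MonoidHom.ker ρ ∧
      Nonempty (Subgroup.closure {u, v} ≃* Multiplicative (ZMod 2 × ZMod 2)) := by
  rintro u v rfl rfl
  obtain ⟨hu, hv, huv⟩ := sq_eq_one_and_commute_of_braid (of_sq_eq_one 0) (of_sq_eq_one 2)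
    (of_sq_eq_one 3) (of_braid (by simp [rels])) (of_braid (by simp [rels]))
    commute_of_zero_conj_of_three
  have ne_one_of_signedPerm {w : GI} : toGroup signedPerm_rels w ≠ 1 → w ≠ 1 := ne_one_of_map
  refine ⟨hu, hv, huv, ?_, ?_, nonempty_closure_pair_mulEquiv hu hv huv ?_ ?_ ?_⟩
  · rw [MonoidHom.mem_ker]; simp only [map_mul, h1, h2, h3]; decide
  · rw [MonoidHom.mem_ker]; simp only [map_mul, h1, h2, h3]; decide
  all_goals apply ne_one_of_signedPerm; simp only [map_mul, toGroup_signedPerm_of]; decide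

/-- Theorem 3.4 (intermediate step): in `G_I`, the elements `u = g1 g2 g3 g2` and
`v = g2 g3 g1 g3` are involutions, commute, lie in the kernel of `ρ`, and generate a
subgroup isomorphic to `(ℤ/2ℤ)²`. -/
theorem u_v_generate_klein (ρ : GI →* Equiv.Perm (Fin 5))
    (h1 : ρ (PresentedGroup.of 0) = Equiv.swap 0 1)
    (h1' : ρ (PresentedGroup.of 1) = Equiv.swap 0 1)
    (h2 : ρ (PresentedGroup.of 2) = Equiv.swap 0 2)
    (h3 : ρ (PresentedGroup.of 3) = Equiv.swap 1 2)
    (h4 : ρ (PresentedGroup.of 4) = Equiv.swap 1 3)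
    (h5 : ρ (PresentedGroup.of 5) = Equiv.swap 0 4) :
    ∀ u v : GI,
      u = PresentedGroup.of 0 * PresentedGroup.of 2 * PresentedGroup.of 3
            * PresentedGroup.of 2 →
      v = PresentedGroup.of 2 * PresentedGroup.of 3 * PresentedGroup.of 0
            * PresentedGroup.of 3 →
      u ^ 2 = 1 ∧ v ^ 2 = 1 ∧ u * v = v * u ∧
      u ∈ MonoidHom.ker ρ ∧ v ∈ MonoidHom.ker ρ ∧
      Nonempty (Subgroup.closure {u, v} ≃* Multiplicative (ZMod 2 × ZMod 2)) :=
  u_v_generate_klein_general ρ h1 h2 h3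

end Stmt5
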